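/- Let A be a symmetric positive definite real 3×3 matrix and u ∈ ℝ³ a unit vector. Let R : ℝ → ℝ^{3×3}, θ : ℝ → ℝ, t₀ ∈ ℝ, ω ∈ ℝ³, v ∈ ℝ, and suppose R has derivative R(t₀)·ω^× at t₀ and θ has derivative v at t₀. Write R₀ := R(t₀), θ₀ := θ(t₀). Then the map t ↦ Ra(θ(t),u)·ψ(A·T(R(t),θ(t))) has derivative D_R(R₀,θ₀)·ω + D_θ(R₀,θ₀)·v at t₀. -/

import Mathlib

open Matrix

noncomputable section

abbrev M3 : Type := Matrix (Fin 3) (Fin 3) ℝ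
abbrev V3 : Type := Fin 3 → ℝ

/-- skew-symmetric matrix associated to `x`: `skew x *ᵥ y = x ×₃ y`. -/
def skew (x : V3) : M3 :=
  !![0, -x 2, x 1; x 2, 0, -x 0; -x 1, x 0, 0]

/-- the special orthogonal group SO(3) as a subset of 3×3 matrices -/
def SO3 : Set M3 := {R | Rᵀ * R = 1 ∧ R.det = 1}

/-- Rodrigues formula -/
def Ra (θ : ℝ) (u : V3) : M3 :=
  1 + Real.sin θ • skew u + (1 - Real.cos θ) • (skew u * skew u)

/-- `psi M = vec (P_a M)`, the vector part of the antisymmetric projection -/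
def psi (M : M3) : V3 :=
  ![(M 2 1 - M 1 2) / 2, (M 0 2 - M 2 0) / 2, (M 1 0 - M 0 1) / 2]

/-- the angular-warping transformation `T(R,θ) = R · Ra(θ,u)` -/
def Tmap (u : V3) (R : M3) (θ : ℝ) : M3 := R * Ra θ u

/-- the potential function `U(R,θ)` on SO(3) × ℝ -/
def Ufun (A : M3) (u : V3) (γ : ℝ) (R : M3) (θ : ℝ) : ℝ :=
  (A * (1 - Tmap u R θ)).trace + γ / 2 * θ ^ 2

/-- Euclidean norm on ℝ³ -/
def enorm3 (x : V3) : ℝ := Real.sqrt (x ⬝ᵥ x)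

/-- Frobenius norm of a 3×3 matrix -/
def fnorm (M : M3) : ℝ := Real.sqrt ((Mᵀ * M).trace)

/-- `E(M) := (tr(M) I − Mᵀ)/2` -/
def Emap (M : M3) : M3 := (2⁻¹ : ℝ) • (M.trace • (1 : M3) - Mᵀ)

/-- `D_R(R,θ)` from Lemma 2 -/
def DR (A : M3) (u : V3) (R : M3) (θ : ℝ) : M3 :=
  Ra θ u * Emap (A * Tmap u R θ) * (Ra θ u)ᵀ

/-- `D_θ(R,θ)` from Lemma 2 -/
def Dθ (A : M3) (u : V3) (R : M3) (θ : ℝ) : V3 :=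
  (Ra θ u * Emap (A * Tmap u R θ)) *ᵥ u - skew (Ra θ u *ᵥ psi (A * Tmap u R θ)) *ᵥ u

/-- Δ(v,u) from the construction of the synergistic gap -/
def Delta (A : M3) (v u : V3) : ℝ :=
  u ⬝ᵥ ((A.trace • (1 : M3) - A - (2 * (v ⬝ᵥ A *ᵥ v)) • ((1 : M3) - vecMulVec v v)) *ᵥ u)

/-- `v` is a unit eigenvector of `A` -/
def IsUnitEigen (A : M3) (v : V3) : Prop :=
  v ⬝ᵥ v = 1 ∧ ∃ lam : ℝ, A *ᵥ v = lam • v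

/-- Ā := (tr(A) I − A)/2 -/
def Abar (A : M3) : M3 := (2⁻¹ : ℝ) • (A.trace • (1 : M3) - A)

/-- `lam` is an eigenvalue of `M` -/
def IsEigen (M : M3) (lam : ℝ) : Prop := ∃ w : V3, w ≠ 0 ∧ M *ᵥ w = lam • w
attribute [local instance] Matrix.normedAddCommGroup Matrix.normedSpace


/-! Differentiating `T = R · Ra(θ, u)` gives `T' = T · (Ra(θ, u)ᵀ ω + θ' u)^×`: the factor `ω^×` is
moved past the rotation `Ra(θ, u)` because rotations preserve the cross product, and
`d/dθ Ra(θ, u) = u^× Ra(θ, u)` with `u^×` commuting with `Ra(θ, u)`. Since `ψ(M x^×) = E(M) x`,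
the product rule for `Ra(θ, u) · ψ(A T)` then produces `D_R ω` and `θ' D_θ`, the last term of
`D_θ` coming from `u^× Ra(θ, u) ψ = -(Ra(θ, u) ψ)^× u`. -/

lemma skew_mulVec (x y : V3) : skew x *ᵥ y = x ⨯₃ y := by
  ext i; fin_cases i <;> simp [skew, cross_apply, mulVec, dotProduct, Fin.sum_univ_three] <;> ring

lemma skew_mul_skew_mul_skew (u : V3) :
    skew u * (skew u * skew u) = -(u ⬝ᵥ u) • skew u := by
  ext i j; fin_cases i <;> fin_cases j <;>
    simp [skew, mul_apply, dotProduct, Fin.sum_univ_three] <;> ring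

lemma skew_mul_mulVec (u : V3) (M : M3) (x : V3) :
    (skew u * M) *ᵥ x = -(skew (M *ᵥ x) *ᵥ u) := by
  rw [← mulVec_mulVec, skew_mulVec, skew_mulVec, cross_anticomm]

lemma transpose_skew (x : V3) : (skew x)ᵀ = -skew x := by
  ext i j; fin_cases i <;> fin_cases j <;> simp [skew]

lemma psi_add (M N : M3) : psi (M + N) = psi M + psi N := by
  ext i; fin_cases i <;> simp [psi] <;> ring

lemma psi_smul (c : ℝ) (M : M3) : psi (c • M) = c • psi M := by
  ext i; fin_cases i <;> simp [psi] <;> ring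

lemma psi_mul_skew (M : M3) (x : V3) : psi (M * skew x) = Emap M *ᵥ x := by
  ext i; fin_cases i <;>
    simp [psi, Emap, skew, mul_apply, mulVec, dotProduct, Fin.sum_univ_three, trace,
      one_apply] <;> ring

def psiLinearMap : M3 →ₗ[ℝ] V3 where
  toFun := psi
  map_add' := psi_add
  map_smul' := psi_smul

lemma SO3.mulVec_cross {Q : M3} (hQ : Q ∈ SO3) (a b : V3) :
    Q *ᵥ (a ⨯₃ b) = (Q *ᵥ a) ⨯₃ (Q *ᵥ b) := by
  have hcancel (x : V3) : (Q *ᵥ x) ᵥ* Q = x := by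
    rw [← vecMul_transpose, vecMul_vecMul, hQ.1, vecMul_one]
  refine dotProduct_eq_iff.mp fun w => ?_
  have hrows : of ![w, Q *ᵥ a, Q *ᵥ b] * Q = of ![w ᵥ* Q, a, b] := by
    ext i j
    fin_cases i
    · rfl
    · exact congrFun (hcancel a) j
    · exact congrFun (hcancel b) j
  have hdet := congrArg det hrows
  rw [det_mul, hQ.2, mul_one] at hdet
  rw [dotProduct_comm, dotProduct_mulVec, triple_product_eq_det, dotProduct_comm,
    triple_product_eq_det]
  exact hdet.symm

lemma SO3.skew_mul {Q : M3} (hQ : Q ∈ SO3) (y : V3) : skew y * Q = Q * skew (Qᵀ *ᵥ y) := by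
  have hQQt : Q * Qᵀ = 1 := mul_eq_one_comm.mp hQ.1
  refine ext_iff_mulVec.mpr fun z => ?_
  rw [← mulVec_mulVec, ← mulVec_mulVec, skew_mulVec, skew_mulVec, SO3.mulVec_cross hQ,
    mulVec_mulVec, hQQt, one_mulVec]

lemma Ra_zero (u : V3) : Ra 0 u = 1 := by simp [Ra]

lemma transpose_Ra (θ : ℝ) (u : V3) : (Ra θ u)ᵀ = Ra (-θ) u := by
  simp only [Ra, transpose_add, transpose_smul, transpose_one, transpose_mul, transpose_skew,
    neg_mul_neg, Real.sin_neg, Real.cos_neg, smul_neg, neg_smul]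

lemma commute_skew_Ra (θ : ℝ) (u : V3) : Commute (skew u) (Ra θ u) :=
  ((Commute.one_right _).add_right ((Commute.refl _).smul_right _)).add_right
    (((Commute.refl _).mul_right (Commute.refl _)).smul_right _)

lemma Ra_add {u : V3} (hu : u ⬝ᵥ u = 1) (θ φ : ℝ) : Ra (θ + φ) u = Ra θ u * Ra φ u := by
  have h3 := skew_mul_skew_mul_skew u
  rw [hu] at h3
  simp only [Ra, mul_add, add_mul, mul_one, one_mul, mul_smul_comm, smul_mul_assoc, mul_assoc,
    h3, smul_smul, Real.sin_add, Real.cos_add]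
  module

lemma skew_mul_Ra {u : V3} (hu : u ⬝ᵥ u = 1) (θ : ℝ) :
    skew u * Ra θ u = Real.cos θ • skew u + Real.sin θ • (skew u * skew u) := by
  have h3 := skew_mul_skew_mul_skew u
  rw [hu] at h3
  simp only [Ra, mul_add, mul_one, mul_smul_comm, h3]
  module

-- `det (Ra θ u) = det (Ra (θ / 2) u) ^ 2` is nonnegative, and it is `±1` by orthogonality.
lemma Ra_mem_SO3 {u : V3} (hu : u ⬝ᵥ u = 1) (θ : ℝ) : Ra θ u ∈ SO3 := by
  have horth : (Ra θ u)ᵀ * Ra θ u = 1 := by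
    rw [transpose_Ra, ← Ra_add hu, neg_add_cancel, Ra_zero]
  refine ⟨horth, ?_⟩
  have hsq : (Ra θ u).det ^ 2 = 1 := by simpa [sq] using congrArg det horth
  have hnonneg : 0 ≤ (Ra θ u).det := by
    rw [← add_halves θ, Ra_add hu, det_mul]
    exact mul_self_nonneg _
  nlinarith

section Calculus

variable {l m n : Type*} [Fintype l] [Fintype m] [Fintype n] {t : ℝ}

theorem HasDerivAt.matrix_mul {f : ℝ → Matrix l m ℝ} {g : ℝ → Matrix m n ℝ}
    {f' : Matrix l m ℝ} {g' : Matrix m n ℝ} (hf : HasDerivAt f f' t) (hg : HasDerivAt g g' t) :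
    HasDerivAt (fun s => f s * g s) (f t * g' + f' * g t) t :=
  (LinearMap.mk₂ ℝ (· * ·) Matrix.add_mul (fun _ _ _ => Matrix.smul_mul _ _ _) Matrix.mul_add
    (fun _ _ _ => Matrix.mul_smul _ _ _)).toContinuousBilinearMap.hasDerivAt_of_bilinear
    (fun _ => hf) (fun _ => hg)

theorem HasDerivAt.matrix_mulVec {f : ℝ → Matrix m n ℝ} {g : ℝ → n → ℝ}
    {f' : Matrix m n ℝ} {g' : n → ℝ} (hf : HasDerivAt f f' t) (hg : HasDerivAt g g' t) :
    HasDerivAt (fun s => f s *ᵥ g s) (f t *ᵥ g' + f' *ᵥ g t) t :=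
  (mulVecBilin ℝ ℝ : Matrix m n ℝ →ₗ[ℝ] (n → ℝ) →ₗ[ℝ] m → ℝ).toContinuousBilinearMap
    |>.hasDerivAt_of_bilinear (fun _ => hf) (fun _ => hg)

theorem HasDerivAt.psi {f : ℝ → M3} {f' : M3} (hf : HasDerivAt f f' t) :
    HasDerivAt (fun s => psi (f s)) (psi f') t :=
  psiLinearMap.toContinuousLinearMap.hasFDerivAt.comp_hasDerivAt t hf

theorem hasDerivAt_Ra {u : V3} (hu : u ⬝ᵥ u = 1) {θ : ℝ → ℝ} {v : ℝ}
    (hθ : HasDerivAt θ v t) :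
    HasDerivAt (fun s => Ra (θ s) u) (v • (skew u * Ra (θ t) u)) t := by
  refine (((hasDerivAt_const t (1 : M3)).add (hθ.sin.smul_const (skew u))).add
    (((hasDerivAt_const t (1 : ℝ)).sub hθ.cos).smul_const (skew u * skew u))).congr_deriv ?_
  rw [skew_mul_Ra hu]
  module

theorem hasDerivAt_Tmap {u : V3} (hu : u ⬝ᵥ u = 1) {R : ℝ → M3} {θ : ℝ → ℝ} {ω : V3} {v : ℝ}
    (hR : HasDerivAt R (R t * skew ω) t) (hθ : HasDerivAt θ v t) :
    HasDerivAt (fun s => Tmap u (R s) (θ s))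
      (Tmap u (R t) (θ t) * (skew ((Ra (θ t) u)ᵀ *ᵥ ω) + v • skew u)) t := by
  refine (hR.matrix_mul (hasDerivAt_Ra hu hθ)).congr_deriv ?_
  rw [Tmap, (commute_skew_Ra _ _).eq, mul_assoc (R t), SO3.skew_mul (Ra_mem_SO3 hu _) ω]
  simp only [Matrix.mul_add, Matrix.mul_smul, mul_assoc]
  abel

end Calculus

theorem deriv_of_psi_term_general
    (A : M3) (u : V3) (hu : u ⬝ᵥ u = 1)
    (R : ℝ → M3) (θ : ℝ → ℝ) (t₀ : ℝ) (ω : V3) (v : ℝ)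
    (hR : HasDerivAt R (R t₀ * skew ω) t₀) (hθ : HasDerivAt θ v t₀) :
    HasDerivAt (fun t => Ra (θ t) u *ᵥ psi (A * Tmap u (R t) (θ t)))
      (DR A u (R t₀) (θ t₀) *ᵥ ω + v • Dθ A u (R t₀) (θ t₀)) t₀ := by
  refine ((hasDerivAt_Ra hu hθ).matrix_mulVec
    ((hasDerivAt_const t₀ A).matrix_mul (hasDerivAt_Tmap hu hR hθ)).psi).congr_deriv ?_
  simp only [zero_mul, add_zero, ← mul_assoc A, Matrix.mul_add, Matrix.mul_smul, psi_add,
    psi_smul, psi_mul_skew, smul_mulVec, skew_mul_mulVec, mulVec_add, mulVec_smul]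
  simp only [DR, Dθ, mul_assoc, mulVec_mulVec]
  module

theorem deriv_of_psi_term
    (A : M3) (hA : A.PosDef) (u : V3) (hu : u ⬝ᵥ u = 1)
    (R : ℝ → M3) (θ : ℝ → ℝ) (t₀ : ℝ) (ω : V3) (v : ℝ)
    (hR : HasDerivAt R (R t₀ * skew ω) t₀) (hθ : HasDerivAt θ v t₀) :
    HasDerivAt (fun t => Ra (θ t) u *ᵥ psi (A * Tmap u (R t) (θ t)))
      (DR A u (R t₀) (θ t₀) *ᵥ ω + v • Dθ A u (R t₀) (θ t₀)) t₀ :=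
  deriv_of_psi_term_general A u hu R θ t₀ ω v hR hθ
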